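/- The series sum over k≥1 of 1/(5^k·(2k-1)(2k)(2k+1)) equals (1/2)ln(4/5) + (3/√5)·ln(α) - 1/2, where α = (1+√5)/2 is the golden ratio. -/

import Mathlib

/-!
Split `1 / ((2k+1)(2k+2)(2k+3))` into partial fractions. Against the weights `x^(2k+2)` the three
pieces sum to multiples of `L = log (1 + x) - log (1 - x)` (the odd part of the logarithm series)
and of `log (1 - x²)`. At `x = 1/√5` one has `x^(2k+2) = 5^-(k+1)`, `1 - x² = 4/5` and
`(1 + x)/(1 - x) = α²`, so `L = 2 log α`.
-/

open Real

lemma hasSum_pow_div_two_mul_add_one {x : ℝ} (hx : |x| < 1) :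
    HasSum (fun k : ℕ => x ^ (2 * k + 2) / (2 * k + 1)) (x / 2 * (log (1 + x) - log (1 - x))) := by
  refine ((hasSum_log_sub_log_of_abs_lt_one hx).mul_left (x / 2)).congr_fun fun k => ?_
  ring

lemma hasSum_pow_div_two_mul_add_two {x : ℝ} (hx : |x| < 1) :
    HasSum (fun k : ℕ => x ^ (2 * k + 2) / (2 * k + 2)) (-log (1 - x ^ 2) / 2) := by
  have hx2 : |x ^ 2| < 1 := by
    rw [abs_pow, sq_lt_one_iff₀ (abs_nonneg x)]
    exact hx
  refine ((hasSum_pow_div_log_of_abs_lt_one hx2).div_const 2).congr_fun fun k => ?_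
  field_simp
  ring

lemma hasSum_pow_div_two_mul_add_three {x : ℝ} (hx : |x| < 1) (hx0 : x ≠ 0) :
    HasSum (fun k : ℕ => x ^ (2 * k + 2) / (2 * k + 3))
      ((log (1 + x) - log (1 - x)) / (2 * x) - 1) := by
  have hL := (hasSum_nat_add_iff' 1).mpr (hasSum_log_sub_log_of_abs_lt_one hx)
  refine (congrArg (HasSum _) ?_).mpr ((hL.div_const (2 * x)).congr_fun fun k => ?_)
  · simp
    field_simp
  · push_cast
    field_simp
    ring

lemma one_div_two_mul_add_one_mul_add_two_mul_add_three (k : ℕ) :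
    1 / ((2 * (k : ℝ) + 1) * (2 * k + 2) * (2 * k + 3)) =
      1 / (2 * k + 1) / 2 - 1 / (2 * k + 2) + 1 / (2 * k + 3) / 2 := by
  field_simp
  ring

theorem hasSum_pow_div_two_mul_add_one_mul_add_two_mul_add_three {x : ℝ} (hx : |x| < 1)
    (hx0 : x ≠ 0) :
    HasSum (fun k : ℕ => x ^ (2 * k + 2) / ((2 * k + 1) * (2 * k + 2) * (2 * k + 3)))
      ((x + x⁻¹) / 4 * (log (1 + x) - log (1 - x)) + log (1 - x ^ 2) / 2 - 1 / 2) := by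
  have h := (((hasSum_pow_div_two_mul_add_one hx).div_const 2).sub
    (hasSum_pow_div_two_mul_add_two hx)).add ((hasSum_pow_div_two_mul_add_three hx hx0).div_const 2)
  refine (congrArg (HasSum _) ?_).mpr (h.congr_fun fun k => ?_)
  · field_simp
    ring
  · rw [div_eq_mul_one_div, one_div_two_mul_add_one_mul_add_two_mul_add_three]
    ring

lemma log_one_add_inv_sqrt_five_sub_log_one_sub_inv_sqrt_five :
    log (1 + (√5)⁻¹) - log (1 - (√5)⁻¹) = 2 * log ((1 + √5) / 2) := by
  have hs : √5 ^ 2 = 5 := sq_sqrt (by norm_num)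
  have hs2 : 2 < √5 := by nlinarith [sqrt_nonneg 5]
  have hinv : (√5)⁻¹ < 1 := inv_lt_one_of_one_lt₀ (by linarith)
  have hratio : (1 + (√5)⁻¹) / (1 - (√5)⁻¹) = ((1 + √5) / 2) ^ 2 := by
    have : √5 - 1 ≠ 0 := by linarith
    field_simp
    linear_combination (-√5 - 1) * hs
  rw [← log_div (by positivity) (by linarith), hratio, log_pow]
  push_cast
  ring

theorem stmt_12 :
    ∑' k : ℕ, 1 / (5 ^ (k + 1) * (2 * (k : ℝ) + 1) * (2 * k + 2) * (2 * k + 3)) =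
      (1 / 2) * Real.log (4 / 5)
        + (3 / Real.sqrt 5) * Real.log ((1 + Real.sqrt 5) / 2) - 1 / 2 := by
  have hs : √5 ^ 2 = 5 := sq_sqrt (by norm_num)
  have hx : |(√5)⁻¹| < 1 := by
    rw [abs_inv, abs_of_pos (by positivity)]
    exact inv_lt_one_of_one_lt₀ (by nlinarith [sqrt_nonneg 5])
  have hpow (k : ℕ) : (√5)⁻¹ ^ (2 * k + 2) = 1 / 5 ^ (k + 1) := by
    rw [show 2 * k + 2 = 2 * (k + 1) by ring, pow_mul, inv_pow, hs, one_div, inv_pow]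
  have h := hasSum_pow_div_two_mul_add_one_mul_add_two_mul_add_three hx (by positivity)
  simp only [hpow, inv_pow, hs, log_one_add_inv_sqrt_five_sub_log_one_sub_inv_sqrt_five] at h
  convert h.tsum_eq using 1
  · congr 1
    funext k
    field_simp
  · rw [show (1 : ℝ) - 5⁻¹ = 4 / 5 by norm_num]
    field_simp
    linear_combination (-4 * log ((1 + √5) / 2)) * hs
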